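/- For every integer k > 1 and real 0 ≤ u < 1/(k−1), there exists a dictionary A with coherence exactly u and generalized coherence μ_k(A) = min(ku/(1−(k−1)u), 1). In particular, the bound μ_k ≤ kμ/(1−(k−1)μ) is tight. -/

import Mathlib

/-!
For unit vectors `w = ∑ xᵢ aᵢ` and `v = ∑ yⱼ aⱼ` in the spans of disjoint sets of at most `k`
atoms, `|⟪w, v⟫| ≤ μ ‖x‖₁ ‖y‖₁`, while expanding `‖w‖² = 1` with the coherence bound and
Cauchy–Schwarz gives `‖x‖₁² (1 - (k - 1) μ) ≤ k`; hence `|⟪w, v⟫| ≤ k μ / (1 - (k - 1) μ)`.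

For tightness take two blocks of `k` atoms, each with Gram matrix `(1 + u) I - u J`, and all cross
inner products equal to `c = min(u, (1 - (k - 1) u) / k)`: the atoms are `√(1 + u) (eᵢ - 𝟙 / k)`
plus one of two fixed vectors of squared norm `(1 - (k - 1) u) / k` with inner product `c`.
The normalized block sums have inner product
`k c / (1 - (k - 1) u) = min(k u / (1 - (k - 1) u), 1)`.
-/

/-- Generalized coherence of degree `k`. -/
noncomputable def genCoherence {m N : ℕ} (A : Fin N → EuclideanSpace ℝ (Fin m)) (k : ℕ) : ℝ :=
  sSup {r : ℝ | ∃ I J : Finset (Fin N), I.card ≤ k ∧ J.card ≤ k ∧ Disjoint I J ∧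
    ∃ u ∈ Submodule.span ℝ (A '' I), ∃ v ∈ Submodule.span ℝ (A '' J),
      ‖u‖ = 1 ∧ ‖v‖ = 1 ∧ r = |(inner ℝ u v : ℝ)|}

open Finset RealInnerProductSpace Submodule

section Coherence

lemma abs_mul_mul_le_of_abs_le {x y g μ : ℝ} (hg : |g| ≤ μ) : |x * y * g| ≤ μ * (|x| * |y|) := by
  rw [abs_mul, abs_mul, mul_comm μ]
  gcongr

variable {ι E : Type*} [NormedAddCommGroup E] [InnerProductSpace ℝ E] (a : ι → E)

lemma inner_sum_smul_sum_smul (I J : Finset ι) (x y : ι → ℝ) :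
    ⟪∑ i ∈ I, x i • a i, ∑ j ∈ J, y j • a j⟫ = ∑ i ∈ I, ∑ j ∈ J, x i * y j * ⟪a i, a j⟫ := by
  simp_rw [sum_inner, inner_sum, real_inner_smul_left, real_inner_smul_right, mul_assoc]

lemma abs_inner_sum_smul_sum_smul_le {I J : Finset ι} {μ : ℝ}
    (hμ : ∀ i ∈ I, ∀ j ∈ J, |⟪a i, a j⟫| ≤ μ) (x y : ι → ℝ) :
    |⟪∑ i ∈ I, x i • a i, ∑ j ∈ J, y j • a j⟫| ≤ μ * (∑ i ∈ I, |x i|) * ∑ j ∈ J, |y j| := by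
  rw [inner_sum_smul_sum_smul, mul_assoc, sum_mul_sum, mul_sum]
  refine (abs_sum_le_sum_abs _ _).trans (sum_le_sum fun i hi => ?_)
  rw [mul_sum]
  exact (abs_sum_le_sum_abs _ _).trans
    (sum_le_sum fun j hj => abs_mul_mul_le_of_abs_le (hμ i hi j hj))

lemma norm_sum_smul_sq_ge {I : Finset ι} {μ : ℝ} (hnorm : ∀ i ∈ I, ‖a i‖ = 1)
    (hμ : ∀ i ∈ I, ∀ j ∈ I, i ≠ j → |⟪a i, a j⟫| ≤ μ) (x : ι → ℝ) :
    (1 + μ) * ∑ i ∈ I, x i ^ 2 - μ * (∑ i ∈ I, |x i|) ^ 2 ≤ ‖∑ i ∈ I, x i • a i‖ ^ 2 := by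
  classical
  -- Diagonal terms are credited `μ xᵢ²` so that `-μ |xᵢ| |xⱼ|` can be summed over all pairs.
  have hterm : ∀ i ∈ I, ∀ j ∈ I, (if i = j then (1 + μ) * x i ^ 2 else 0) - μ * (|x i| * |x j|)
      ≤ x i * x j * ⟪a i, a j⟫ := by
    intro i hi j hj
    by_cases hij : i = j
    · subst hij
      rw [if_pos rfl, real_inner_self_eq_norm_sq, hnorm i hi, abs_mul_abs_self]
      exact le_of_eq (by ring)
    · rw [if_neg hij, zero_sub]
      exact neg_le_of_abs_le (abs_mul_mul_le_of_abs_le (hμ i hi j hj hij))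
  calc (1 + μ) * ∑ i ∈ I, x i ^ 2 - μ * (∑ i ∈ I, |x i|) ^ 2
      = ∑ i ∈ I, ∑ j ∈ I, ((if i = j then (1 + μ) * x i ^ 2 else 0) - μ * (|x i| * |x j|)) := by
        simp [sum_sub_distrib, ← mul_sum, sq, sum_mul_sum]
    _ ≤ ∑ i ∈ I, ∑ j ∈ I, x i * x j * ⟪a i, a j⟫ :=
        sum_le_sum fun i hi => sum_le_sum fun j hj => hterm i hi j hj
    _ = ‖∑ i ∈ I, x i • a i‖ ^ 2 := by
        rw [← inner_sum_smul_sum_smul, real_inner_self_eq_norm_sq]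

lemma sq_sum_abs_mul_le {I : Finset ι} {k : ℕ} (hI : #I ≤ k) {μ : ℝ} (hμ0 : 0 ≤ μ)
    (hnorm : ∀ i ∈ I, ‖a i‖ = 1) (hμ : ∀ i ∈ I, ∀ j ∈ I, i ≠ j → |⟪a i, a j⟫| ≤ μ) (x : ι → ℝ) :
    (∑ i ∈ I, |x i|) ^ 2 * (1 - (k - 1) * μ) ≤ k * ‖∑ i ∈ I, x i • a i‖ ^ 2 := by
  have hcs : (∑ i ∈ I, |x i|) ^ 2 ≤ #I * ∑ i ∈ I, x i ^ 2 := by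
    simpa only [sq_abs] using sq_sum_le_card_mul_sum_sq (s := I) (f := fun i => |x i|)
  have hnorm_ge := norm_sum_smul_sq_ge a hnorm hμ x
  have hIk : (#I : ℝ) * ∑ i ∈ I, x i ^ 2 ≤ k * ∑ i ∈ I, x i ^ 2 :=
    mul_le_mul_of_nonneg_right (by exact_mod_cast hI) (sum_nonneg fun i _ => sq_nonneg (x i))
  nlinarith [mul_le_mul_of_nonneg_left hnorm_ge (Nat.cast_nonneg k),
    mul_le_mul_of_nonneg_left (hcs.trans hIk) (by linarith : (0 : ℝ) ≤ 1 + μ)]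

theorem abs_inner_le_of_mem_span_of_disjoint {k : ℕ} {μ : ℝ} (hμ0 : 0 ≤ μ)
    (hμk : (k - 1) * μ < 1) (hnorm : ∀ i, ‖a i‖ = 1) (hμ : ∀ i j, i ≠ j → |⟪a i, a j⟫| ≤ μ)
    {I J : Finset ι} (hI : #I ≤ k) (hJ : #J ≤ k) (hIJ : Disjoint I J) {w v : E}
    (hw : w ∈ span ℝ (a '' I)) (hv : v ∈ span ℝ (a '' J)) (hw1 : ‖w‖ = 1) (hv1 : ‖v‖ = 1) :
    |⟪w, v⟫| ≤ k * μ / (1 - (k - 1) * μ) := by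
  obtain ⟨x, rfl⟩ := (mem_span_image_finset_iff_exists_fun' ℝ).mp hw
  obtain ⟨y, rfl⟩ := (mem_span_image_finset_iff_exists_fun' ℝ).mp hv
  have hx := sq_sum_abs_mul_le a hI hμ0 (fun i _ => hnorm i) (fun i _ j _ => hμ i j) x
  have hy := sq_sum_abs_mul_le a hJ hμ0 (fun i _ => hnorm i) (fun i _ j _ => hμ i j) y
  have hcross := abs_inner_sum_smul_sum_smul_le a
    (fun i hi j hj => hμ i j (ne_of_mem_of_not_mem hj (disjoint_left.mp hIJ hi)).symm) x y
  rw [hw1, one_pow, mul_one] at hx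
  rw [hv1, one_pow, mul_one] at hy
  set Sx := ∑ i ∈ I, |x i|
  set Sy := ∑ j ∈ J, |y j|
  have hC : 0 < 1 - (k - 1) * μ := by linarith
  have hSx : 0 ≤ Sx := sum_nonneg fun i _ => abs_nonneg (x i)
  have hSy : 0 ≤ Sy := sum_nonneg fun j _ => abs_nonneg (y j)
  have hprod : Sx * Sy * (1 - (k - 1) * μ) ≤ (k : ℝ) := by
    refine le_of_sq_le_sq ?_ (Nat.cast_nonneg k)
    calc (Sx * Sy * (1 - (k - 1) * μ)) ^ 2
        = (Sx ^ 2 * (1 - (k - 1) * μ)) * (Sy ^ 2 * (1 - (k - 1) * μ)) := by ring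
      _ ≤ (k : ℝ) * k := mul_le_mul hx hy (by positivity) (Nat.cast_nonneg k)
      _ = (k : ℝ) ^ 2 := (sq _).symm
  rw [le_div_iff₀ hC]
  nlinarith [mul_le_mul_of_nonneg_right hcross hC.le, mul_le_mul_of_nonneg_left hprod hμ0]

end Coherence

lemma sum_centered_mul_centered {k : ℕ} (hk : k ≠ 0) (α : ℝ) (i j : Fin k) :
    ∑ l : Fin k, α * ((if j = l then 1 else 0) - 1 / k) * (α * ((if i = l then 1 else 0) - 1 / k))
      = α ^ 2 * ((if i = j then 1 else 0) - 1 / k) := by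
  have : (k : ℝ) ≠ 0 := by exact_mod_cast hk
  simp only [sub_mul, mul_sub, sum_sub_distrib, ite_mul, zero_mul, mul_ite, mul_one,
    mul_zero, sum_ite_eq, sum_const, mem_univ, if_true, card_univ, Fintype.card_fin, nsmul_eq_mul]
  rcases eq_or_ne j i with rfl | hji
  · simp only [if_true]; field_simp; ring
  · simp only [hji, hji.symm, if_false]; field_simp; ring

noncomputable def twoBlockFamily (k : ℕ) (α a b : ℝ) (s : Bool × Fin k) :
    EuclideanSpace ℝ ((Bool × Fin k) ⊕ Bool) :=
  WithLp.toLp 2 fun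
    | .inl t => if s.1 = t.1 then α * ((if s.2 = t.2 then 1 else 0) - 1 / k) else 0
    | .inr r => if r then a else if s.1 then b else -b

lemma inner_twoBlockFamily {k : ℕ} (hk : k ≠ 0) (α a b : ℝ) (s t : Bool × Fin k) :
    ⟪twoBlockFamily k α a b s, twoBlockFamily k α a b t⟫ =
      if s.1 = t.1 then α ^ 2 * ((if s.2 = t.2 then 1 else 0) - 1 / k) + a ^ 2 + b ^ 2
      else a ^ 2 - b ^ 2 := by
  obtain ⟨s₁, i⟩ := s
  obtain ⟨t₁, j⟩ := t
  rw [PiLp.inner_apply, Fintype.sum_sum_type, Fintype.sum_prod_type]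
  cases s₁ <;> cases t₁ <;>
    simp only [twoBlockFamily, RCLike.inner_apply, conj_trivial, Fintype.sum_bool, if_true,
      if_false, Bool.false_eq_true, Bool.true_eq_false, zero_mul, mul_zero, sum_const_zero,
      zero_add, add_zero, sum_centered_mul_centered hk] <;> ring

def twoBlockGram (k : ℕ) (u c : ℝ) (s t : Bool × Fin k) : ℝ :=
  if s.1 = t.1 then (if s.2 = t.2 then 1 else -u) else c

lemma exists_inner_eq_twoBlockGram {k : ℕ} (hk : k ≠ 0) {u c : ℝ} (hu : -1 ≤ u)
    (hc : |c| ≤ (1 - (k - 1) * u) / k) :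
    ∃ v : Bool × Fin k → EuclideanSpace ℝ ((Bool × Fin k) ⊕ Bool),
      ∀ s t, ⟪v s, v t⟫ = twoBlockGram k u c s t := by
  obtain ⟨hc₁, hc₂⟩ := abs_le.mp hc
  set β := (1 - (k - 1) * u) / k with hβ
  refine ⟨twoBlockFamily k √(1 + u) √((β + c) / 2) √((β - c) / 2), fun s t => ?_⟩
  rw [inner_twoBlockFamily hk, Real.sq_sqrt (by linarith), Real.sq_sqrt (by linarith),
    Real.sq_sqrt (by linarith), twoBlockGram]
  have : (k : ℝ) ≠ 0 := by exact_mod_cast hk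
  split_ifs <;> rw [hβ] <;> field_simp <;> ring

lemma exists_fin_family_inner_eq {ι X : Type*} [Fintype ι] [Fintype X]
    (v : ι → EuclideanSpace ℝ X) :
    ∃ (m N : ℕ) (e : ι ≃ Fin N) (A : Fin N → EuclideanSpace ℝ (Fin m)),
      ∀ s t, ⟪A (e s), A (e t)⟫ = ⟪v s, v t⟫ := by
  let T := LinearIsometryEquiv.piLpCongrLeft 2 ℝ ℝ (Fintype.equivFin X)
  refine ⟨_, _, Fintype.equivFin ι, fun i => T (v ((Fintype.equivFin ι).symm i)), fun s t => ?_⟩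
  simp only [Equiv.symm_apply_apply, LinearIsometryEquiv.inner_map_map]

section TwoBlock

variable {ι E : Type*} [NormedAddCommGroup E] [InnerProductSpace ℝ E] {k : ℕ} {u c : ℝ}
  {A : ι → E} {e : Bool × Fin k ≃ ι}

lemma norm_eq_one_of_inner_eq_twoBlockGram
    (hA : ∀ s t, ⟪A (e s), A (e t)⟫ = twoBlockGram k u c s t) (i : ι) : ‖A i‖ = 1 := by
  obtain ⟨s, rfl⟩ := e.surjective i
  have hs := hA s s
  rw [real_inner_self_eq_norm_sq, twoBlockGram, if_pos rfl, if_pos rfl] at hs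
  exact (pow_eq_one_iff_of_nonneg (norm_nonneg _) two_ne_zero).mp hs

lemma isGreatest_coherence_of_inner_eq_twoBlockGram
    (hA : ∀ s t, ⟪A (e s), A (e t)⟫ = twoBlockGram k u c s t) (hk : 1 < k) (hu : 0 ≤ u)
    (hc : |c| ≤ u) : IsGreatest {r | ∃ i j, i ≠ j ∧ r = |⟪A i, A j⟫|} u := by
  refine ⟨⟨e (false, ⟨0, by omega⟩), e (false, ⟨1, hk⟩), by simp, ?_⟩, ?_⟩
  · simp [hA, twoBlockGram, abs_of_nonneg hu]
  · rintro r ⟨i, j, hij, rfl⟩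
    obtain ⟨s, rfl⟩ := e.surjective i
    obtain ⟨t, rfl⟩ := e.surjective j
    rw [hA, twoBlockGram]
    split_ifs with h₁ h₂
    · exact absurd (congrArg e (Prod.ext h₁ h₂)) hij
    · rw [abs_neg, abs_of_nonneg hu]
    · exact hc

lemma inner_sum_sum_of_inner_eq_twoBlockGram
    (hA : ∀ s t, ⟪A (e s), A (e t)⟫ = twoBlockGram k u c s t) (b b' : Bool) :
    ⟪∑ i, A (e (b, i)), ∑ j, A (e (b', j))⟫ =
      if b = b' then k * (1 - (k - 1) * u) else k * k * c := by
  simp only [sum_inner, inner_sum, hA, twoBlockGram]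
  split_ifs
  · simp only [sum_ite, filter_eq', filter_ne', mem_univ, if_true, sum_const, card_singleton,
      card_erase_of_mem, card_univ, Fintype.card_fin, nsmul_eq_mul, one_smul, smul_neg]
    rcases k.eq_zero_or_pos with rfl | hk
    · simp
    · rw [Nat.cast_pred hk]; ring
  · simp only [sum_const, card_univ, Fintype.card_fin, nsmul_eq_mul]; ring

lemma exists_inner_eq_of_inner_eq_twoBlockGram
    (hA : ∀ s t, ⟪A (e s), A (e t)⟫ = twoBlockGram k u c s t) (hk : k ≠ 0)
    (hC : 0 < 1 - (k - 1) * u) :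
    ∃ I J : Finset ι, #I ≤ k ∧ #J ≤ k ∧ Disjoint I J ∧
      ∃ w ∈ span ℝ (A '' I), ∃ v ∈ span ℝ (A '' J),
        ‖w‖ = 1 ∧ ‖v‖ = 1 ∧ ⟪w, v⟫ = k * c / (1 - (k - 1) * u) := by
  classical
  let block (b : Bool) : Finset ι := univ.image fun i => e (b, i)
  have hinj (b : Bool) : Function.Injective fun i : Fin k => e (b, i) :=
    fun i j h => (Prod.ext_iff.mp (e.injective h)).2
  have hsum (b : Bool) : ∑ i ∈ block b, A i = ∑ i, A (e (b, i)) :=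
    sum_image fun i _ j _ h => hinj b h
  have hkC : 0 < (k : ℝ) * (1 - (k - 1) * u) := mul_pos (by positivity) hC
  have hnorm (b : Bool) : ‖∑ i ∈ block b, A i‖ = √(k * (1 - (k - 1) * u)) := by
    have h := inner_sum_sum_of_inner_eq_twoBlockGram hA b b
    rw [if_pos rfl, real_inner_self_eq_norm_sq, ← hsum] at h
    rw [← h, Real.sqrt_sq (norm_nonneg _)]
  have hcard (b : Bool) : #(block b) ≤ k := card_image_le.trans (by simp)
  have hspan (b : Bool) :
      (√(k * (1 - (k - 1) * u)))⁻¹ • ∑ i ∈ block b, A i ∈ span ℝ (A '' block b) :=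
    smul_mem _ _ (sum_mem fun i hi => subset_span (Set.mem_image_of_mem A hi))
  have hunit (b : Bool) : ‖(√(k * (1 - (k - 1) * u)))⁻¹ • ∑ i ∈ block b, A i‖ = 1 := by
    rw [norm_smul, hnorm, norm_inv, Real.norm_of_nonneg (Real.sqrt_nonneg _),
      inv_mul_cancel₀ (Real.sqrt_pos.mpr hkC).ne']
  refine ⟨block false, block true, hcard false, hcard true, ?_, _, hspan false, _, hspan true,
    hunit false, hunit true, ?_⟩
  · simp [block, disjoint_left, e.injective.eq_iff]
  · rw [real_inner_smul_left, real_inner_smul_right, hsum, hsum,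
      inner_sum_sum_of_inner_eq_twoBlockGram hA, if_neg Bool.false_ne_true, ← mul_assoc,
      ← mul_inv, Real.mul_self_sqrt hkC.le]
    field_simp

end TwoBlock

/-- For every integer `k > 1` and real `0 ≤ u < 1/(k-1)` there is a dictionary `A` whose
coherence is exactly `u` and whose generalized coherence of degree `k` equals
`min(ku/(1-(k-1)u), 1)`; hence the bound `μ_k ≤ kμ/(1-(k-1)μ)` is tight. -/
theorem genCoherence_bound_tight (k : ℕ) (hk : 1 < k) (u : ℝ)
    (hu0 : 0 ≤ u) (hu : u < 1 / ((k : ℝ) - 1)) :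
    ∃ (m N : ℕ) (A : Fin N → EuclideanSpace ℝ (Fin m)),
      (∀ i, ‖A i‖ = 1) ∧
      IsGreatest {r : ℝ | ∃ i j : Fin N, i ≠ j ∧ r = |(inner ℝ (A i) (A j) : ℝ)|} u ∧
      genCoherence A k = min ((k : ℝ) * u / (1 - ((k : ℝ) - 1) * u)) 1 := by
  have hk0 : (0 : ℝ) < k := by positivity
  have hμk : ((k : ℝ) - 1) * u < 1 := by
    rwa [lt_div_iff₀ (by simpa using hk), mul_comm] at hu
  set C := 1 - ((k : ℝ) - 1) * u
  have hC : 0 < C := by linarith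
  set c := min u (C / k)
  have hc0 : 0 ≤ c := le_min hu0 (by positivity)
  obtain ⟨v, hv⟩ := exists_inner_eq_twoBlockGram (c := c) (by omega) (by linarith)
    ((abs_of_nonneg hc0).trans_le (min_le_right _ _))
  obtain ⟨m, N, e, A, hA⟩ := exists_fin_family_inner_eq v
  replace hA s t : ⟪A (e s), A (e t)⟫ = twoBlockGram k u c s t := (hA s t).trans (hv s t)
  have hnorm := norm_eq_one_of_inner_eq_twoBlockGram hA
  have hcoh := isGreatest_coherence_of_inner_eq_twoBlockGram hA hk hu0
    ((abs_of_nonneg hc0).trans_le (min_le_left _ _))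
  refine ⟨m, N, A, hnorm, hcoh, IsGreatest.csSup_eq ⟨?_, ?_⟩⟩
  · obtain ⟨I, J, hI, hJ, hIJ, w, hw, v, hv, hw1, hv1, hwv⟩ :=
      exists_inner_eq_of_inner_eq_twoBlockGram hA (by omega) hC
    refine ⟨I, J, hI, hJ, hIJ, w, hw, v, hv, hw1, hv1, ?_⟩
    rw [hwv, abs_of_nonneg (by positivity), mul_min_of_nonneg _ _ hk0.le,
      ← min_div_div_right hC.le, mul_div_cancel₀ _ hk0.ne', div_self hC.ne']
  · rintro r ⟨I, J, hI, hJ, hIJ, w, hw, v, hv, hw1, hv1, rfl⟩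
    refine le_min (abs_inner_le_of_mem_span_of_disjoint A hu0 hμk hnorm
      (fun i j hij => hcoh.2 ⟨i, j, hij, rfl⟩) hI hJ hIJ hw hv hw1 hv1) ?_
    exact (abs_real_inner_le_norm w v).trans (by rw [hw1, hv1, one_mul])
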